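/- arXiv:2112.15504 — 2 statements merged into one kernel-verified Lean document; each statement's English description precedes it below -/
import Mathlib

section
/- Let p > 0, τ > 0, s > 0 and α > 0. For every measurable function F : ℝⁿ → ℂ, (∫_{ℝⁿ} |1 − exp(−τ (α|ξ|)^s)|² |F(ξ)|² dξ)^{1/2} ≤ τ^{min(p,s)/s} · α^{min(p,s)} · (∫_{ℝⁿ} (1+|ξ|²)^p |F(ξ)|² dξ)^{1/2}. -/
/-!
The multiplier `1 - exp (-x)` lies in `[0, 1]` and is at most `x`, hence at most `x ^ θ` for every
`θ ∈ [0, 1]`. Taking `x = τ (α |ξ|) ^ s` and `θ = min p s / s` gives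
`|1 - exp (-τ (α |ξ|) ^ s)| ≤ τ ^ θ α ^ min p s |ξ| ^ min p s ≤ τ ^ θ α ^ min p s (1 + |ξ|²) ^ (p / 2)`,
and squaring and integrating this pointwise bound against `|F|²` gives the estimate.
-/

open MeasureTheory

namespace Real

theorem one_sub_exp_neg_le_rpow {x θ : ℝ} (hx : 0 ≤ x) (hθ₀ : 0 ≤ θ) (hθ₁ : θ ≤ 1) :
    1 - exp (-x) ≤ x ^ θ := by
  rcases le_total x 1 with hx₁ | hx₁
  · calc 1 - exp (-x) ≤ x := by linarith [add_one_le_exp (-x)]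
      _ ≤ x ^ θ := self_le_rpow_of_le_one hx hx₁ hθ₁
  · calc 1 - exp (-x) ≤ 1 := by linarith [exp_pos (-x)]
      _ ≤ x ^ θ := one_le_rpow hx₁ hθ₀

theorem rpow_le_one_add_sq_rpow_half {r m p : ℝ} (hr : 0 ≤ r) (hm : 0 ≤ m) (hmp : m ≤ p) :
    r ^ m ≤ (1 + r ^ 2) ^ (p / 2) := by
  have hbase : 1 ≤ 1 + r ^ 2 := by linarith [sq_nonneg r]
  calc r ^ m = (r ^ 2) ^ (m / 2) := by
        rw [← rpow_natCast r 2, ← rpow_mul hr, Nat.cast_ofNat, mul_div_cancel₀ m two_ne_zero]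
    _ ≤ (1 + r ^ 2) ^ (m / 2) := rpow_le_rpow (sq_nonneg r) (by linarith) (by positivity)
    _ ≤ (1 + r ^ 2) ^ (p / 2) := rpow_le_rpow_of_exponent_le hbase (by linarith)

theorem abs_one_sub_exp_neg_rpow_le {p τ s α r : ℝ} (hp : 0 < p) (hτ : 0 < τ) (hs : 0 < s)
    (hα : 0 < α) (hr : 0 ≤ r) :
    |1 - exp (-(τ * (α * r) ^ s))|
      ≤ τ ^ (min p s / s) * α ^ min p s * (1 + r ^ 2) ^ (p / 2) := by
  set m := min p s
  set x := τ * (α * r) ^ s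
  have hαr : 0 ≤ α * r := mul_nonneg hα.le hr
  have hx : 0 ≤ x := mul_nonneg hτ.le (rpow_nonneg hαr _)
  have hm : 0 < m := lt_min hp hs
  have hmult_nonneg : 0 ≤ 1 - exp (-x) := by
    linarith [exp_le_one_iff.mpr (neg_nonpos.mpr hx)]
  have hx_rpow : x ^ (m / s) = τ ^ (m / s) * α ^ m * r ^ m := by
    rw [mul_rpow hτ.le (rpow_nonneg hαr _), ← rpow_mul hαr, mul_div_cancel₀ _ hs.ne',
      mul_rpow hα.le hr, mul_assoc]
  calc |1 - exp (-x)| = 1 - exp (-x) := abs_of_nonneg hmult_nonneg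
    _ ≤ x ^ (m / s) :=
        one_sub_exp_neg_le_rpow hx (div_pos hm hs).le ((div_le_one hs).mpr (min_le_right p s))
    _ = τ ^ (m / s) * α ^ m * r ^ m := hx_rpow
    _ ≤ τ ^ (m / s) * α ^ m * (1 + r ^ 2) ^ (p / 2) := by
        gcongr
        exact rpow_le_one_add_sq_rpow_half hr hm.le (min_le_left p s)

end Real

theorem lintegral_ofReal_rpow_half_le_of_le_sq_mul {X : Type*} [MeasurableSpace X] (μ : Measure X)
    {f g : X → ℝ} {C : ℝ} (hC : 0 ≤ C) (hfg : ∀ x, f x ≤ C ^ 2 * g x) :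
    (∫⁻ x, ENNReal.ofReal (f x) ∂μ) ^ (1 / 2 : ℝ)
      ≤ ENNReal.ofReal C * (∫⁻ x, ENNReal.ofReal (g x) ∂μ) ^ (1 / 2 : ℝ) := by
  have hint : ∫⁻ x, ENNReal.ofReal (f x) ∂μ
      ≤ ENNReal.ofReal (C ^ 2) * ∫⁻ x, ENNReal.ofReal (g x) ∂μ := by
    rw [← lintegral_const_mul' _ _ ENNReal.ofReal_ne_top]
    refine lintegral_mono fun x => ?_
    rw [← ENNReal.ofReal_mul (sq_nonneg C)]
    exact ENNReal.ofReal_le_ofReal (hfg x)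
  have hsqrt : ENNReal.ofReal (C ^ 2) ^ (1 / 2 : ℝ) = ENNReal.ofReal C := by
    rw [ENNReal.ofReal_rpow_of_nonneg (sq_nonneg C) (by norm_num), ← Real.rpow_natCast,
      ← Real.rpow_mul hC]
    norm_num
  calc (∫⁻ x, ENNReal.ofReal (f x) ∂μ) ^ (1 / 2 : ℝ)
      ≤ (ENNReal.ofReal (C ^ 2) * ∫⁻ x, ENNReal.ofReal (g x) ∂μ) ^ (1 / 2 : ℝ) :=
        ENNReal.rpow_le_rpow hint (by norm_num)
    _ = ENNReal.ofReal C * (∫⁻ x, ENNReal.ofReal (g x) ∂μ) ^ (1 / 2 : ℝ) := by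
        rw [ENNReal.mul_rpow_of_nonneg _ _ (by norm_num), hsqrt]

theorem stmt_6_general (n : ℕ) (p τ s α : ℝ) (hp : 0 < p) (hτ : 0 < τ)
    (hs : 0 < s) (hα : 0 < α)
    (F : EuclideanSpace ℝ (Fin n) → ℂ) :
    (∫⁻ ξ : EuclideanSpace ℝ (Fin n),
        ENNReal.ofReal (|1 - Real.exp (-(τ * (α * ‖ξ‖) ^ s))| ^ 2 * ‖F ξ‖ ^ 2))
          ^ (1 / 2 : ℝ)
      ≤ ENNReal.ofReal (τ ^ (min p s / s) * α ^ min p s) *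
        (∫⁻ ξ : EuclideanSpace ℝ (Fin n),
          ENNReal.ofReal ((1 + ‖ξ‖ ^ 2) ^ p * ‖F ξ‖ ^ 2)) ^ (1 / 2 : ℝ) := by
  set C := τ ^ (min p s / s) * α ^ min p s
  refine lintegral_ofReal_rpow_half_le_of_le_sq_mul _ (by positivity) fun ξ => ?_
  have hmult := Real.abs_one_sub_exp_neg_rpow_le hp hτ hs hα (norm_nonneg ξ)
  have hweight : ((1 + ‖ξ‖ ^ 2) ^ (p / 2)) ^ 2 = (1 + ‖ξ‖ ^ 2) ^ p := by
    rw [← Real.rpow_natCast, ← Real.rpow_mul (by positivity)]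
    norm_num
  calc |1 - Real.exp (-(τ * (α * ‖ξ‖) ^ s))| ^ 2 * ‖F ξ‖ ^ 2
      ≤ (C * (1 + ‖ξ‖ ^ 2) ^ (p / 2)) ^ 2 * ‖F ξ‖ ^ 2 := by gcongr
    _ = C ^ 2 * ((1 + ‖ξ‖ ^ 2) ^ p * ‖F ξ‖ ^ 2) := by rw [mul_pow, hweight]; ring

theorem stmt_6 (n : ℕ) (hn : 1 ≤ n) (p τ s α : ℝ) (hp : 0 < p) (hτ : 0 < τ)
    (hs : 0 < s) (hα : 0 < α)
    (F : EuclideanSpace ℝ (Fin n) → ℂ) (hF : Measurable F) :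
    (∫⁻ ξ : EuclideanSpace ℝ (Fin n),
        ENNReal.ofReal (|1 - Real.exp (-(τ * (α * ‖ξ‖) ^ s))| ^ 2 * ‖F ξ‖ ^ 2))
          ^ (1 / 2 : ℝ)
      ≤ ENNReal.ofReal (τ ^ (min p s / s) * α ^ min p s) *
        (∫⁻ ξ : EuclideanSpace ℝ (Fin n),
          ENNReal.ofReal ((1 + ‖ξ‖ ^ 2) ^ p * ‖F ξ‖ ^ 2)) ^ (1 / 2 : ℝ) :=
  stmt_6_general n p τ s α hp hτ hs hα F
end

section
/- Let n ≥ 1, τ > 0, s > 0, θ > 1 and δ > 0, and let Gδ ∈ L²(ℝⁿ) with 0 < θ δ < ‖Gδ‖_{L²}. Then the function v : (0, ∞) → ℝ defined by v(α) = ‖(1 − exp(−τ (α|·|)^s)) Gδ‖_{L²} is strictly increasing and continuous, satisfies v(α) → 0 as α → 0⁺ and v(α) → ‖Gδ‖_{L²} as α → ∞, and consequently there exists a unique α > 0 with ‖(1 − exp(−τ (α|·|)^s)) Gδ(·)‖_{L²} = θ δ. -/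
/-! `v(α) = √(∫ m_α² ‖Gδ‖²)` with weight `m_α(ξ) = 1 - exp(-τ (α|ξ|)^s) ∈ [0, 1)`.
For fixed `ξ ≠ 0` the weight increases strictly in `α`, from `0` at `α = 0` to `1` at `α = ∞`.
Since `{ξ = 0}` is null and `Gδ` is not a.e. zero, `v` is strictly increasing, and dominated
convergence (dominant `‖Gδ‖²`) gives continuity and the two limits. The intermediate value theorem
and strict monotonicity then give the unique `α` with `v(α) = θδ ∈ (0, ‖Gδ‖)`. -/

open MeasureTheory Filter Set
open scoped ENNReal Topology

noncomputable section

/-- The symbol of `I - M_α` at the point `t = α|ξ|`. -/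
def residualSymbol (τ s t : ℝ) : ℝ := 1 - Real.exp (-(τ * t ^ s))

section residualSymbol

variable {τ s t : ℝ}

theorem residualSymbol_zero (hs : s ≠ 0) : residualSymbol τ s 0 = 0 := by
  simp [residualSymbol, Real.zero_rpow hs]

theorem residualSymbol_nonneg (hτ : 0 ≤ τ) (ht : 0 ≤ t) : 0 ≤ residualSymbol τ s t := by
  have : 0 ≤ τ * t ^ s := mul_nonneg hτ (Real.rpow_nonneg ht s)
  simpa [residualSymbol] using Real.exp_le_one_iff.mpr (neg_nonpos.mpr this)

theorem residualSymbol_lt_one : residualSymbol τ s t < 1 := by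
  simpa [residualSymbol] using Real.exp_pos (-(τ * t ^ s))

theorem abs_residualSymbol_le_one (hτ : 0 ≤ τ) (ht : 0 ≤ t) : |residualSymbol τ s t| ≤ 1 :=
  abs_le.mpr ⟨by linarith [residualSymbol_nonneg (s := s) hτ ht], residualSymbol_lt_one.le⟩

theorem strictMonoOn_residualSymbol (hτ : 0 < τ) (hs : 0 < s) :
    StrictMonoOn (residualSymbol τ s) (Ici 0) := by
  intro a ha b _ hab
  have : τ * a ^ s < τ * b ^ s := mul_lt_mul_of_pos_left (Real.rpow_lt_rpow ha hab hs) hτ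
  simpa [residualSymbol] using this

theorem continuous_residualSymbol (hs : 0 ≤ s) : Continuous (residualSymbol τ s) :=
  continuous_const.sub (Real.continuous_exp.comp
    ((continuous_const.mul (Real.continuous_rpow_const hs)).neg))

theorem tendsto_residualSymbol_atTop (hτ : 0 < τ) (hs : 0 < s) :
    Tendsto (residualSymbol τ s) atTop (𝓝 1) := by
  have h := Real.tendsto_exp_neg_atTop_nhds_zero.comp
    ((tendsto_rpow_atTop hs).const_mul_atTop hτ)
  unfold residualSymbol
  simpa using (tendsto_const_nhds (x := (1 : ℝ))).sub h

theorem abs_residualSymbol_mul_norm_le_one {E : Type*} [SeminormedAddCommGroup E] (hτ : 0 ≤ τ)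
    {α : ℝ} (hα : 0 ≤ α) (ξ : E) :
    |residualSymbol τ s (α * ‖ξ‖)| ≤ 1 :=
  abs_residualSymbol_le_one hτ (mul_nonneg hα (norm_nonneg ξ))

end residualSymbol

section WeightedL2

variable {X : Type*} [MeasurableSpace X] {μ : Measure X} {G : X → ℂ} {m m₁ m₂ : X → ℝ}

theorem MeasureTheory.MemLp.toReal_eLpNorm_two_eq_sqrt {f : X → ℂ} (hf : MemLp f 2 μ) :
    (eLpNorm f 2 μ).toReal = √(∫ x, ‖f x‖ ^ 2 ∂μ) := by
  rw [hf.eLpNorm_eq_integral_rpow_norm two_ne_zero ENNReal.ofNat_ne_top,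
    ENNReal.toReal_ofReal (by positivity), Real.sqrt_eq_rpow]
  norm_num

theorem MeasureTheory.MemLp.ofReal_mul (hG : MemLp G 2 μ) (hm : AEStronglyMeasurable m μ)
    (hm1 : ∀ x, |m x| ≤ 1) : MemLp (fun x => (m x : ℂ) * G x) 2 μ :=
  hG.of_le ((Complex.continuous_ofReal.comp_aestronglyMeasurable hm).mul hG.1)
    (Eventually.of_forall fun x => by
      rw [norm_mul, Complex.norm_real, Real.norm_eq_abs]
      exact mul_le_of_le_one_left (norm_nonneg _) (hm1 x))

theorem toReal_eLpNorm_ofReal_mul (hG : MemLp G 2 μ) (hm : AEStronglyMeasurable m μ)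
    (hm1 : ∀ x, |m x| ≤ 1) :
    (eLpNorm (fun x => (m x : ℂ) * G x) 2 μ).toReal = √(∫ x, m x ^ 2 * ‖G x‖ ^ 2 ∂μ) := by
  simp [(hG.ofReal_mul hm hm1).toReal_eLpNorm_two_eq_sqrt, mul_pow]

theorem integrable_sq_mul_norm_sq (hG : MemLp G 2 μ) (hm : AEStronglyMeasurable m μ)
    (hm1 : ∀ x, |m x| ≤ 1) : Integrable (fun x => m x ^ 2 * ‖G x‖ ^ 2) μ := by
  simpa [mul_pow] using (hG.ofReal_mul hm hm1).integrable_norm_pow two_ne_zero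

theorem toReal_eLpNorm_ofReal_mul_lt (hG : MemLp G 2 μ) (hG0 : ¬G =ᵐ[μ] 0)
    (hm₁ : AEStronglyMeasurable m₁ μ) (hm₂ : AEStronglyMeasurable m₂ μ)
    (hm₁1 : ∀ x, |m₁ x| ≤ 1) (hm₂1 : ∀ x, |m₂ x| ≤ 1)
    (hlt : ∀ᵐ x ∂μ, G x ≠ 0 → |m₁ x| < |m₂ x|) :
    (eLpNorm (fun x => (m₁ x : ℂ) * G x) 2 μ).toReal <
      (eLpNorm (fun x => (m₂ x : ℂ) * G x) 2 μ).toReal := by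
  rw [toReal_eLpNorm_ofReal_mul hG hm₁ hm₁1, toReal_eLpNorm_ofReal_mul hG hm₂ hm₂1]
  set d : X → ℝ := fun x => m₂ x ^ 2 * ‖G x‖ ^ 2 - m₁ x ^ 2 * ‖G x‖ ^ 2
  have hd_pos : ∀ᵐ x ∂μ, G x ≠ 0 → 0 < d x := by
    filter_upwards [hlt] with x hx hGx
    simp only [d, ← sub_mul]
    exact mul_pos (sub_pos.mpr (sq_lt_sq.mpr (hx hGx))) (by positivity)
  have hd_nonneg : 0 ≤ᵐ[μ] d := by
    filter_upwards [hd_pos] with x hx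
    by_cases hGx : G x = 0
    · simp [d, hGx]
    · exact (hx hGx).le
  have hG_supp : μ {x | G x ≠ 0} ≠ 0 := fun h => hG0 (ae_iff.mpr (by simpa using h))
  have hd_supp : 0 < μ (Function.support d) := by
    refine (pos_iff_ne_zero.mpr hG_supp).trans_le (measure_mono_ae ?_)
    filter_upwards [hd_pos] with x hx hGx
    exact (hx hGx).ne'
  have hI₁ := integrable_sq_mul_norm_sq hG hm₁ hm₁1
  have hI₂ := integrable_sq_mul_norm_sq hG hm₂ hm₂1
  have hd : 0 < ∫ x, d x ∂μ :=
    (integral_pos_iff_support_of_nonneg_ae hd_nonneg (hI₂.sub hI₁)).mpr hd_supp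
  rw [integral_sub hI₂ hI₁] at hd
  exact Real.sqrt_lt_sqrt (integral_nonneg fun x => by positivity) (sub_pos.mp hd)

theorem tendsto_toReal_eLpNorm_ofReal_mul {ι : Type*} {l : Filter ι} [l.IsCountablyGenerated]
    {m : ι → X → ℝ} {g : X → ℝ} (hG : MemLp G 2 μ)
    (hm : ∀ᶠ i in l, AEStronglyMeasurable (m i) μ) (hm1 : ∀ᶠ i in l, ∀ x, |m i x| ≤ 1)
    (hg : AEStronglyMeasurable g μ) (hg1 : ∀ x, |g x| ≤ 1)
    (hlim : ∀ᵐ x ∂μ, Tendsto (m · x) l (𝓝 (g x))) :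
    Tendsto (fun i => (eLpNorm (fun x => (m i x : ℂ) * G x) 2 μ).toReal) l
      (𝓝 (eLpNorm (fun x => (g x : ℂ) * G x) 2 μ).toReal) := by
  rw [toReal_eLpNorm_ofReal_mul hG hg hg1]
  have hint : Tendsto (fun i => ∫ x, m i x ^ 2 * ‖G x‖ ^ 2 ∂μ) l
      (𝓝 (∫ x, g x ^ 2 * ‖G x‖ ^ 2 ∂μ)) := by
    refine tendsto_integral_filter_of_dominated_convergence (fun x => ‖G x‖ ^ 2) ?_ ?_
      (hG.integrable_norm_pow two_ne_zero) ?_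
    · filter_upwards [hm] with i hi
      exact (hi.pow 2).mul (hG.1.norm.pow 2)
    · filter_upwards [hm1] with i hi
      refine Eventually.of_forall fun x => ?_
      rw [norm_mul, norm_pow, Real.norm_eq_abs, norm_pow, norm_norm]
      exact mul_le_of_le_one_left (by positivity) (pow_le_one₀ (abs_nonneg _) (hi x))
    · filter_upwards [hlim] with x hx
      exact (hx.pow 2).mul_const _
  refine ((Real.continuous_sqrt.tendsto _).comp hint).congr' ?_
  filter_upwards [hm, hm1] with i hi hi1
  exact (toReal_eLpNorm_ofReal_mul hG hi hi1).symm

end WeightedL2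

theorem existsUnique_pos_eq_of_strictMonoOn {f : ℝ → ℝ} {a b c : ℝ}
    (hmono : StrictMonoOn f (Ioi 0)) (hcont : ContinuousOn f (Ioi 0))
    (h0 : Tendsto f (𝓝[>] 0) (𝓝 a)) (htop : Tendsto f atTop (𝓝 b)) (hc : c ∈ Ioo a b) :
    ∃! x, 0 < x ∧ f x = c := by
  obtain ⟨x, hx, hfx⟩ := isPreconnected_Ioi.intermediate_value_Ioo
    (le_principal_iff.mpr self_mem_nhdsWithin) (le_principal_iff.mpr (Ioi_mem_atTop 0))
    hcont h0 htop hc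
  exact ⟨x, ⟨hx, hfx⟩, fun y ⟨hy, hfy⟩ => hmono.injOn hy hx (hfy.trans hfx.symm)⟩

section ResidualNorm

variable {E : Type*} [NormedAddCommGroup E] [MeasurableSpace E] [OpensMeasurableSpace E]
  {μ : Measure E} {G : E → ℂ} {τ s : ℝ}

def residualNorm (μ : Measure E) (τ s : ℝ) (G : E → ℂ) (α : ℝ) : ℝ :=
  (eLpNorm (fun ξ => (residualSymbol τ s (α * ‖ξ‖) : ℂ) * G ξ) 2 μ).toReal

theorem aestronglyMeasurable_residualSymbol_mul_norm (hs : 0 ≤ s) (α : ℝ) :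
    AEStronglyMeasurable (fun ξ : E => residualSymbol τ s (α * ‖ξ‖)) μ :=
  ((continuous_residualSymbol hs).comp (continuous_const.mul continuous_norm))
    |>.measurable.aestronglyMeasurable

theorem strictMonoOn_residualNorm [NullSingletonClass μ] (hτ : 0 < τ) (hs : 0 < s)
    (hG : MemLp G 2 μ) (hG0 : ¬G =ᵐ[μ] 0) : StrictMonoOn (residualNorm μ τ s G) (Ioi 0) := by
  intro a ha b hb hab
  refine toReal_eLpNorm_ofReal_mul_lt hG hG0
    (aestronglyMeasurable_residualSymbol_mul_norm hs.le a)
    (aestronglyMeasurable_residualSymbol_mul_norm hs.le b)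
    (abs_residualSymbol_mul_norm_le_one hτ.le (le_of_lt ha))
    (abs_residualSymbol_mul_norm_le_one hτ.le (le_of_lt hb))
    ((μ.ae_ne 0).mono fun ξ hξ _ => ?_)
  have haξ : 0 ≤ a * ‖ξ‖ := mul_nonneg (le_of_lt ha) (norm_nonneg ξ)
  have hlt := strictMonoOn_residualSymbol hτ hs haξ (mul_nonneg (le_of_lt hb) (norm_nonneg ξ))
    (mul_lt_mul_of_pos_right hab (norm_pos_iff.mpr hξ))
  have hnonneg := residualSymbol_nonneg (s := s) hτ.le haξ
  rwa [abs_of_nonneg hnonneg, abs_of_nonneg (hnonneg.trans hlt.le)]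

theorem continuousOn_residualNorm (hτ : 0 ≤ τ) (hs : 0 ≤ s) (hG : MemLp G 2 μ) :
    ContinuousOn (residualNorm μ τ s G) (Ioi 0) := fun α hα =>
  ContinuousAt.continuousWithinAt <| tendsto_toReal_eLpNorm_ofReal_mul hG
    (Eventually.of_forall (aestronglyMeasurable_residualSymbol_mul_norm hs))
    ((lt_mem_nhds hα).mono fun _ hβ => abs_residualSymbol_mul_norm_le_one hτ (le_of_lt hβ))
    (aestronglyMeasurable_residualSymbol_mul_norm hs α)
    (abs_residualSymbol_mul_norm_le_one hτ (le_of_lt hα))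
    (Eventually.of_forall fun _ =>
      ((continuous_residualSymbol hs).comp (continuous_id.mul continuous_const)).tendsto α)

theorem tendsto_residualNorm_zero (hτ : 0 ≤ τ) (hs : 0 < s) (hG : MemLp G 2 μ) :
    Tendsto (residualNorm μ τ s G) (𝓝[>] 0) (𝓝 0) := by
  have h := tendsto_toReal_eLpNorm_ofReal_mul (l := 𝓝[>] 0) (g := fun _ => 0) hG
    (Eventually.of_forall (aestronglyMeasurable_residualSymbol_mul_norm hs.le))
    (eventually_mem_nhdsWithin.mono fun _ hβ =>
      abs_residualSymbol_mul_norm_le_one hτ (le_of_lt hβ))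
    aestronglyMeasurable_const (by simp) (Eventually.of_forall fun ξ => ?_)
  · simp only [Complex.ofReal_zero, zero_mul, eLpNorm_zero', ENNReal.toReal_zero] at h
    exact h
  have hcont : Continuous fun β : ℝ => residualSymbol τ s (β * ‖ξ‖) :=
    (continuous_residualSymbol hs.le).comp (continuous_id.mul continuous_const)
  simpa [residualSymbol_zero hs.ne'] using (hcont.tendsto 0).mono_left nhdsWithin_le_nhds

theorem tendsto_residualNorm_atTop [NullSingletonClass μ] (hτ : 0 < τ) (hs : 0 < s)
    (hG : MemLp G 2 μ) :
    Tendsto (residualNorm μ τ s G) atTop (𝓝 (eLpNorm G 2 μ).toReal) := by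
  have h := tendsto_toReal_eLpNorm_ofReal_mul (g := fun _ => 1) hG
    (Eventually.of_forall (aestronglyMeasurable_residualSymbol_mul_norm hs.le))
    ((eventually_ge_atTop 0).mono fun _ => abs_residualSymbol_mul_norm_le_one hτ.le)
    aestronglyMeasurable_const (by simp)
    ((μ.ae_ne 0).mono fun ξ hξ =>
      (tendsto_residualSymbol_atTop hτ hs).comp
        (tendsto_id.atTop_mul_const (norm_pos_iff.mpr hξ)))
  simp only [Complex.ofReal_one, one_mul] at h
  exact h

end ResidualNorm

theorem stmt_17 (n : ℕ) (hn : 1 ≤ n) (τ s θ δ : ℝ) (hτ : 0 < τ) (hs : 0 < s)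
    (hθ : 1 < θ) (hδ : 0 < δ)
    (Gδ : EuclideanSpace ℝ (Fin n) → ℂ)
    (hG : MemLp Gδ 2 (volume : Measure (EuclideanSpace ℝ (Fin n))))
    (hratio : θ * δ < (eLpNorm Gδ 2 volume).toReal) :
    let v : ℝ → ℝ := fun α =>
      (eLpNorm (fun ξ => ((1 - Real.exp (-(τ * (α * ‖ξ‖) ^ s)) : ℝ) : ℂ) * Gδ ξ)
        2 volume).toReal
    StrictMonoOn v (Set.Ioi 0) ∧ ContinuousOn v (Set.Ioi 0) ∧
      Tendsto v (nhdsWithin 0 (Set.Ioi 0)) (nhds 0) ∧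
      Tendsto v atTop (nhds ((eLpNorm Gδ 2 volume).toReal)) ∧
      ∃! α : ℝ, 0 < α ∧ v α = θ * δ := by
  intro v
  have : Nontrivial (EuclideanSpace ℝ (Fin n)) :=
    Module.nontrivial_of_finrank_pos (R := ℝ) (by rw [finrank_euclideanSpace_fin]; omega)
  have hθδ : 0 < θ * δ := by positivity
  have hG0 : ¬Gδ =ᵐ[volume] 0 := fun h => by
    rw [eLpNorm_congr_ae h, eLpNorm_zero, ENNReal.toReal_zero] at hratio
    linarith
  have hmono : StrictMonoOn v (Ioi 0) := strictMonoOn_residualNorm hτ hs hG hG0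
  have hcont : ContinuousOn v (Ioi 0) := continuousOn_residualNorm hτ.le hs.le hG
  have hzero : Tendsto v (𝓝[>] 0) (𝓝 0) := tendsto_residualNorm_zero hτ.le hs hG
  have htop : Tendsto v atTop (𝓝 (eLpNorm Gδ 2 volume).toReal) :=
    tendsto_residualNorm_atTop hτ hs hG
  exact ⟨hmono, hcont, hzero, htop, existsUnique_pos_eq_of_strictMonoOn hmono hcont hzero htop
    ⟨hθδ, hratio⟩⟩
end
end
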